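/- arXiv:2211.00617 — 2 statements merged into one kernel-verified Lean document; each statement's English description precedes it below -/
import Mathlib

section
/- Let C : L²(0,1;ℝ) → ℝ be defined by C(K) = ∫₀¹ (K_t X_t)² dt, where X is the solution of X_t = 1 + ∫₀ᵗ K_s X_s ds. For ε > 0, let K^ε ∈ L²(0,1;ℝ) be given by K^ε_t = -(1+ε-t)^{-1}. Then ‖K^ε‖_{L¹} → ∞ as ε → 0, while C(K^ε) = 1/(1+ε)² ≤ 1 for all ε > 0. In particular C is not coercive on L²(0,1;ℝ). -/
open MeasureTheory

/-- The LQ cost `C(K) = ∫₀¹ (K_t X_t)² dt` where `X_t = exp(∫₀ᵗ K_s ds)` is the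
solution of `X_t = 1 + ∫₀ᵗ K_s X_s ds`. -/
noncomputable def lqCost (K : ℝ → ℝ) : ℝ :=
  ∫ t in (0:ℝ)..1, (K t * Real.exp (∫ s in (0:ℝ)..t, K s)) ^ 2

/-- The family of policies `K^ε_t = -(1+ε-t)⁻¹`. -/
noncomputable def Keps (ε : ℝ) : ℝ → ℝ := fun t => -(1 + ε - t)⁻¹

lemma pos_aux {ε t : ℝ} (hε : 0 < ε) (ht : t ∈ Set.Icc (0:ℝ) 1) : 0 < 1 + ε - t := by
  have := ht.2; linarith
lemma hasDerivAt_log_aux {ε : ℝ} (hε : 0 < ε) {t : ℝ} (ht : t ∈ Set.Icc (0:ℝ) 1) :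
    HasDerivAt (fun s => Real.log (1 + ε - s)) (-(1 + ε - t)⁻¹) t := by
  have h1 : HasDerivAt (fun s : ℝ => 1 + ε - s) (-1) t := by
    simpa using (hasDerivAt_id t).const_sub (1 + ε)
  have h2 := (Real.hasDerivAt_log (ne_of_gt (pos_aux hε ht))).comp t h1
  simpa using (show HasDerivAt (fun s => Real.log (1 + ε - s)) _ t from h2)
lemma intInt_aux {ε : ℝ} (hε : 0 < ε) {a b : ℝ} (h : Set.uIcc a b ⊆ Set.Icc (0:ℝ) 1) :
    IntervalIntegrable (Keps ε) volume a b := by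
  apply ContinuousOn.intervalIntegrable
  exact ((continuousOn_const.sub continuousOn_id).inv₀
    (fun x hx => ne_of_gt (pos_aux hε (h hx)))).neg
lemma integral_Keps {ε : ℝ} (hε : 0 < ε) {t : ℝ} (ht : t ∈ Set.Icc (0:ℝ) 1) :
    ∫ s in (0:ℝ)..t, Keps ε s = Real.log (1 + ε - t) - Real.log (1 + ε) := by
  have hsub : Set.uIcc (0:ℝ) t ⊆ Set.Icc (0:ℝ) 1 := by
    rw [Set.uIcc_of_le ht.1]
    exact Set.Icc_subset_Icc le_rfl ht.2
  have h := intervalIntegral.integral_eq_sub_of_hasDerivAt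
    (f := fun s => Real.log (1 + ε - s)) (f' := Keps ε)
    (fun s hs => hasDerivAt_log_aux hε (hsub hs)) (intInt_aux hε hsub)
  simpa using h

lemma lqCost_Keps {ε : ℝ} (hε : 0 < ε) : lqCost (Keps ε) = 1 / (1 + ε) ^ 2 := by
  have huIcc : Set.uIcc (0:ℝ) 1 = Set.Icc 0 1 := Set.uIcc_of_le zero_le_one
  have hcong : Set.EqOn (fun t => (Keps ε t * Real.exp (∫ s in (0:ℝ)..t, Keps ε s)) ^ 2)
      (fun _ => ((1 + ε)⁻¹) ^ 2) (Set.uIcc 0 1) := by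
    intro t ht
    rw [huIcc] at ht
    have hpos := pos_aux hε ht
    have h1 : (0:ℝ) < 1 + ε := by linarith
    have hexp : Real.exp (∫ s in (0:ℝ)..t, Keps ε s) = (1 + ε - t) / (1 + ε) := by
      rw [integral_Keps hε ht, Real.exp_sub, Real.exp_log hpos, Real.exp_log h1]
    simp only
    rw [hexp]
    simp only [Keps]
    field_simp
  rw [lqCost, intervalIntegral.integral_congr hcong]
  simp [one_div]

lemma integral_abs_Keps {ε : ℝ} (hε : 0 < ε) :
    ∫ t in (0:ℝ)..1, |Keps ε t| = Real.log (1 + ε) - Real.log ε := by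
  have huIcc : Set.uIcc (0:ℝ) 1 = Set.Icc 0 1 := Set.uIcc_of_le zero_le_one
  have hcong : Set.EqOn (fun t => |Keps ε t|) (fun t => (1 + ε - t)⁻¹) (Set.uIcc 0 1) := by
    intro t ht
    rw [huIcc] at ht
    have hpos := pos_aux hε ht
    simp [Keps, abs_of_pos, inv_pos.2 hpos, abs_of_pos (inv_pos.2 hpos)]
  rw [intervalIntegral.integral_congr hcong]
  have h := intervalIntegral.integral_eq_sub_of_hasDerivAt
    (f := fun s => -Real.log (1 + ε - s)) (f' := fun t => (1 + ε - t)⁻¹)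
    (a := 0) (b := 1)
    (fun s hs => by simpa using (show HasDerivAt (fun s => -Real.log (1 + ε - s)) _ s from
      (hasDerivAt_log_aux hε (by rwa [huIcc] at hs)).neg))
    (by
      apply ContinuousOn.intervalIntegrable
      exact (continuousOn_const.sub continuousOn_id).inv₀
        (fun x hx => ne_of_gt (pos_aux hε (by rwa [huIcc] at hx))))
  rw [h]
  norm_num
  ring_nf

lemma integral_sq_Keps {ε : ℝ} (hε : 0 < ε) :
    ∫ t in (0:ℝ)..1, (Keps ε t) ^ 2 = ε⁻¹ - (1 + ε)⁻¹ := by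
  have huIcc : Set.uIcc (0:ℝ) 1 = Set.Icc 0 1 := Set.uIcc_of_le zero_le_one
  have h := intervalIntegral.integral_eq_sub_of_hasDerivAt
    (f := fun s => (1 + ε - s)⁻¹) (f' := fun t => (Keps ε t) ^ 2)
    (a := 0) (b := 1)
    (fun s hs => by
      have hpos := pos_aux hε (by rwa [huIcc] at hs)
      have h1 : HasDerivAt (fun u : ℝ => 1 + ε - u) (-1) s := by
        simpa using (hasDerivAt_id s).const_sub (1 + ε)
      have h2 : HasDerivAt (fun u : ℝ => (1 + ε - u)⁻¹) _ s := h1.inv (ne_of_gt hpos)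
      refine h2.congr_deriv ?_
      simp [Keps])
    (by
      apply ContinuousOn.intervalIntegrable
      apply ContinuousOn.pow
      exact ((continuousOn_const.sub continuousOn_id).inv₀
        (fun x hx => ne_of_gt (pos_aux hε (by rwa [huIcc] at hx)))).neg)
  rw [h]
  norm_num

theorem lqCost_noncoercive :
    Filter.Tendsto (fun ε : ℝ => ∫ t in (0:ℝ)..1, |Keps ε t|)
      (nhdsWithin 0 (Set.Ioi 0)) Filter.atTop ∧
    (∀ ε : ℝ, 0 < ε → lqCost (Keps ε) = 1 / (1 + ε) ^ 2 ∧ lqCost (Keps ε) ≤ 1) ∧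
    ¬ (∀ Kn : ℕ → ℝ → ℝ,
        Filter.Tendsto (fun n => ∫ t in (0:ℝ)..1, (Kn n t) ^ 2) Filter.atTop Filter.atTop →
        Filter.Tendsto (fun n => lqCost (Kn n)) Filter.atTop Filter.atTop) := by
  refine ⟨?_, ?_, ?_⟩
  · -- L¹ norm blows up
    have heq : ∀ ε ∈ Set.Ioi (0:ℝ),
        (fun ε : ℝ => ∫ t in (0:ℝ)..1, |Keps ε t|) ε
          = Real.log (1 + ε) - Real.log ε := fun ε hε => integral_abs_Keps hε
    apply Filter.Tendsto.congr' (Filter.eventuallyEq_of_mem self_mem_nhdsWithin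
      (fun ε hε => (heq ε hε).symm))
    have h1 : Filter.Tendsto (fun ε : ℝ => Real.log (1 + ε))
        (nhdsWithin 0 (Set.Ioi 0)) (nhds 0) := by
      have : Filter.Tendsto (fun ε : ℝ => 1 + ε) (nhdsWithin 0 (Set.Ioi 0)) (nhds 1) := by
        have h0 : Continuous (fun ε : ℝ => 1 + ε) := continuous_const.add continuous_id
        have := h0.tendsto (0:ℝ)
        simpa using this.mono_left nhdsWithin_le_nhds
      have hlog := (Real.continuousAt_log (by norm_num : (1:ℝ) ≠ 0)).tendsto
      simpa using (show Filter.Tendsto (fun ε : ℝ => Real.log (1 + ε)) _ _ from hlog.comp this)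
    have h2 : Filter.Tendsto Real.log (nhdsWithin 0 (Set.Ioi 0)) Filter.atBot :=
      Real.tendsto_log_nhdsGT_zero
    have h3 : Filter.Tendsto (fun ε : ℝ => -Real.log ε)
        (nhdsWithin 0 (Set.Ioi 0)) Filter.atTop := Filter.tendsto_neg_atBot_atTop.comp h2
    have h4 : ∀ᶠ ε in nhdsWithin 0 (Set.Ioi 0), (-1:ℝ) ≤ Real.log (1 + ε) :=
      h1.eventually (eventually_ge_nhds (by norm_num : (-1:ℝ) < 0))
    have := Filter.tendsto_atTop_add_left_of_le' _ (-1:ℝ) h4 h3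
    simpa [sub_eq_add_neg] using this
  · intro ε hε
    refine ⟨lqCost_Keps hε, ?_⟩
    rw [lqCost_Keps hε]
    rw [div_le_one (by positivity)]
    nlinarith
  · intro h
    have hK := h (fun n => Keps ((n+1:ℝ)⁻¹))
    have hεpos : ∀ n : ℕ, (0:ℝ) < ((n:ℝ)+1)⁻¹ := fun n => by positivity
    have hsq : Filter.Tendsto
        (fun n : ℕ => ∫ t in (0:ℝ)..1, ((fun n => Keps ((n+1:ℝ)⁻¹)) n t) ^ 2)
        Filter.atTop Filter.atTop := by
      apply Filter.tendsto_atTop_mono (f := fun n : ℕ => (n:ℝ))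
      · intro n
        have := integral_sq_Keps (hεpos n)
        simp only at this ⊢
        rw [this]
        have h1 : (((n:ℝ)+1)⁻¹)⁻¹ = (n:ℝ)+1 := inv_inv _
        have h2 : (1 + ((n:ℝ)+1)⁻¹)⁻¹ ≤ 1 := by
          rw [inv_le_one_iff₀]; right; linarith [(hεpos n).le]
        rw [h1]
        linarith
      · exact tendsto_natCast_atTop_atTop
    have := (hK hsq).eventually (Filter.eventually_gt_atTop (1:ℝ))
    obtain ⟨n, hn⟩ := this.exists
    have hle : lqCost (Keps ((n+1:ℝ)⁻¹)) ≤ 1 := by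
      rw [lqCost_Keps (hεpos n)]
      rw [div_le_one (by positivity)]
      nlinarith [(hεpos n).le]
    linarith
end

section
/- Let ℓ(V) = (1/2)(⟨M, V⟩ - ρ·ln(det V)) for V in the cone of k×k symmetric positive definite matrices, where M is a fixed k×k symmetric matrix and ρ > 0, and ⟨·,·⟩ the Frobenius inner product. Then for all symmetric positive definite V, V': ℓ(V') - ℓ(V) = ⟨∂ℓ(V), V'-V⟩ + (ρ/2)∫₀¹ ⟨V⁻¹·s(V'-V)·(V + s(V'-V))⁻¹, V'-V⟩ ds, where ∂ℓ(V) = (1/2)(M - ρV⁻¹). In particular, ℓ(V') - ℓ(V) ≥ ⟨∂ℓ(V), V'-V⟩ + (ρ/4)·|V'-V|²/max(‖V‖₂, ‖V'‖₂)², and ℓ(V') - ℓ(V) ≤ ⟨∂ℓ(V), V'-V⟩ + (ρ/4)·|V'-V|²/min(λ_min(V), λ_min(V'))², with |·| the Frobenius norm. -/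
open Matrix MeasureTheory

/-- The Frobenius inner product `⟨A, B⟩ = tr(Aᵀ B)`. -/
noncomputable def frobInner {k : ℕ} (A B : Matrix (Fin k) (Fin k) ℝ) : ℝ :=
  (Aᵀ * B).trace

/-- Largest eigenvalue (= spectral norm, for positive definite matrices) via the
Rayleigh quotient. -/
noncomputable def lamMax {k : ℕ} (A : Matrix (Fin k) (Fin k) ℝ) : ℝ :=
  sSup {r : ℝ | ∃ x : Fin k → ℝ, ∑ i, (x i) ^ 2 = 1 ∧ r = x ⬝ᵥ A.mulVec x}

/-- Smallest eigenvalue via the Rayleigh quotient. -/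
noncomputable def lamMin {k : ℕ} (A : Matrix (Fin k) (Fin k) ℝ) : ℝ :=
  sInf {r : ℝ | ∃ x : Fin k → ℝ, ∑ i, (x i) ^ 2 = 1 ∧ r = x ⬝ᵥ A.mulVec x}

/-- The regularised entropy functional `ℓ(V) = ½(⟨M,V⟩ - ρ ln det V)`. -/
noncomputable def entV {k : ℕ} (M : Matrix (Fin k) (Fin k) ℝ) (rho : ℝ)
    (V : Matrix (Fin k) (Fin k) ℝ) : ℝ :=
  (1 / 2) * (frobInner M V - rho * Real.log V.det)

namespace ETEB
open Polynomial
variable {k : ℕ}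


def sph (k : ℕ) : Set (Fin k → ℝ) := {x | ∑ i, (x i) ^ 2 = 1}

lemma continuous_ray (A : Matrix (Fin k) (Fin k) ℝ) :
    Continuous fun x : Fin k → ℝ => x ⬝ᵥ A.mulVec x := by
  simp only [dotProduct, Matrix.mulVec]
  fun_prop

lemma isCompact_sph : IsCompact (sph k) := by
  have hc : IsClosed (sph k) := by
    have : Continuous fun x : Fin k → ℝ => ∑ i, (x i) ^ 2 := by fun_prop
    exact isClosed_eq this continuous_const
  have hb : Bornology.IsBounded (sph k) := by
    apply (Metric.isBounded_iff_subset_closedBall 0).2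
    refine ⟨1, fun x hx => ?_⟩
    simp only [Metric.mem_closedBall, dist_zero_right]
    apply pi_norm_le_iff_of_nonneg zero_le_one |>.2
    intro i
    rw [Real.norm_eq_abs, abs_le_one_iff_mul_self_le_one, ← pow_two]
    calc (x i)^2 ≤ ∑ j, (x j)^2 := Finset.single_le_sum (fun j _ => sq_nonneg (x j)) (Finset.mem_univ i)
    _ = 1 := hx
  exact Metric.isCompact_of_isClosed_isBounded hc hb

lemma sph_nonempty (hk : 0 < k) : (sph k).Nonempty := by
  refine ⟨Pi.single ⟨0, hk⟩ 1, ?_⟩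
  simp [sph, Pi.single_apply, Finset.sum_ite_eq']

lemma raySet_eq (A : Matrix (Fin k) (Fin k) ℝ) :
    {r : ℝ | ∃ x : Fin k → ℝ, ∑ i, (x i) ^ 2 = 1 ∧ r = x ⬝ᵥ A.mulVec x}
      = (fun x : Fin k → ℝ => x ⬝ᵥ A.mulVec x) '' (sph k) := by
  ext r; constructor
  · rintro ⟨x, hx, rfl⟩; exact ⟨x, hx, rfl⟩
  · rintro ⟨x, hx, rfl⟩; exact ⟨x, hx, rfl⟩

lemma isCompact_raySet (A : Matrix (Fin k) (Fin k) ℝ) :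
    IsCompact {r : ℝ | ∃ x : Fin k → ℝ, ∑ i, (x i) ^ 2 = 1 ∧ r = x ⬝ᵥ A.mulVec x} := by
  rw [raySet_eq]; exact isCompact_sph.image (continuous_ray A)

lemma lamMin_le {A : Matrix (Fin k) (Fin k) ℝ} {x : Fin k → ℝ} (hx : ∑ i, (x i) ^ 2 = 1) :
    lamMin A ≤ x ⬝ᵥ A.mulVec x :=
  csInf_le (isCompact_raySet A).bddBelow ⟨x, hx, rfl⟩

lemma le_lamMax {A : Matrix (Fin k) (Fin k) ℝ} {x : Fin k → ℝ} (hx : ∑ i, (x i) ^ 2 = 1) :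
    x ⬝ᵥ A.mulVec x ≤ lamMax A :=
  le_csSup (isCompact_raySet A).bddAbove ⟨x, hx, rfl⟩

lemma exists_lamMin (hk : 0 < k) (A : Matrix (Fin k) (Fin k) ℝ) :
    ∃ x, (∑ i, (x i) ^ 2 = 1) ∧ lamMin A = x ⬝ᵥ A.mulVec x := by
  obtain ⟨x, hx, hmin⟩ := isCompact_sph.exists_isMinOn (sph_nonempty hk)
    (continuous_ray A).continuousOn
  refine ⟨x, hx, ?_⟩
  unfold lamMin
  rw [raySet_eq]
  exact IsLeast.csInf_eq ⟨⟨x, hx, rfl⟩, fun r ⟨y, hy, hry⟩ => hry ▸ hmin hy⟩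

lemma exists_lamMax (hk : 0 < k) (A : Matrix (Fin k) (Fin k) ℝ) :
    ∃ x, (∑ i, (x i) ^ 2 = 1) ∧ lamMax A = x ⬝ᵥ A.mulVec x := by
  obtain ⟨x, hx, hmax⟩ := isCompact_sph.exists_isMaxOn (sph_nonempty hk)
    (continuous_ray A).continuousOn
  refine ⟨x, hx, ?_⟩
  unfold lamMax
  rw [raySet_eq]
  exact IsGreatest.csSup_eq ⟨⟨x, hx, rfl⟩, fun r ⟨y, hy, hry⟩ => hry ▸ hmax hy⟩





lemma ne_zero_of_unit {x : Fin k → ℝ} (hx : ∑ i, (x i) ^ 2 = 1) : x ≠ 0 := by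
  rintro rfl; simp at hx

lemma lamMin_pos (hk : 0 < k) {A : Matrix (Fin k) (Fin k) ℝ} (hA : A.PosDef) :
    0 < lamMin A := by
  obtain ⟨x, hx, hEq⟩ := exists_lamMin hk A
  rw [hEq]
  simpa using hA.dotProduct_mulVec_pos (ne_zero_of_unit hx)

lemma lamMin_le_lamMax (hk : 0 < k) (A : Matrix (Fin k) (Fin k) ℝ) :
    lamMin A ≤ lamMax A := by
  obtain ⟨x, hx, hEq⟩ := exists_lamMin hk A
  exact hEq ▸ le_lamMax hx

lemma lamMax_pos (hk : 0 < k) {A : Matrix (Fin k) (Fin k) ℝ} (hA : A.PosDef) :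
    0 < lamMax A := (lamMin_pos hk hA).trans_le (lamMin_le_lamMax hk A)

lemma ray_lower (A : Matrix (Fin k) (Fin k) ℝ) (x : Fin k → ℝ) :
    lamMin A * (∑ i, (x i) ^ 2) ≤ x ⬝ᵥ A.mulVec x := by
  by_cases h0 : x = 0
  · simp [h0]
  · obtain ⟨i, hi⟩ := Function.ne_iff.1 h0
    have hS : 0 < ∑ i, (x i) ^ 2 :=
      lt_of_lt_of_le (pow_pos (abs_pos.2 hi) 2 |>.trans_eq (sq_abs _))
        (Finset.single_le_sum (fun j _ => sq_nonneg (x j)) (Finset.mem_univ i))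
    set c : ℝ := Real.sqrt (∑ i, (x i) ^ 2) with hcdef
    have hc2 : c ^ 2 = ∑ i, (x i) ^ 2 := Real.sq_sqrt hS.le
    have hc : 0 < c := Real.sqrt_pos.2 hS
    have hy : ∑ i, ((c⁻¹ • x) i) ^ 2 = 1 := by
      simp only [Pi.smul_apply, smul_eq_mul, mul_pow, ← Finset.mul_sum, ← hc2]
      field_simp
    have h1 := lamMin_le (A := A) hy
    have h2 : (c⁻¹ • x) ⬝ᵥ A.mulVec (c⁻¹ • x) = c⁻¹ ^ 2 * (x ⬝ᵥ A.mulVec x) := by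
      rw [Matrix.mulVec_smul, smul_dotProduct, dotProduct_smul]
      simp [smul_eq_mul]; ring
    rw [h2] at h1
    rw [← hc2]
    have h3 : c⁻¹ ^ 2 * (x ⬝ᵥ A.mulVec x) * c ^ 2 = x ⬝ᵥ A.mulVec x := by
      field_simp
    nlinarith [mul_le_mul_of_nonneg_right h1 (sq_nonneg c)]

lemma ray_upper (A : Matrix (Fin k) (Fin k) ℝ) (x : Fin k → ℝ) :
    x ⬝ᵥ A.mulVec x ≤ lamMax A * (∑ i, (x i) ^ 2) := by
  by_cases h0 : x = 0
  · simp [h0]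
  · obtain ⟨i, hi⟩ := Function.ne_iff.1 h0
    have hS : 0 < ∑ i, (x i) ^ 2 :=
      lt_of_lt_of_le (pow_pos (abs_pos.2 hi) 2 |>.trans_eq (sq_abs _))
        (Finset.single_le_sum (fun j _ => sq_nonneg (x j)) (Finset.mem_univ i))
    set c : ℝ := Real.sqrt (∑ i, (x i) ^ 2) with hcdef
    have hc2 : c ^ 2 = ∑ i, (x i) ^ 2 := Real.sq_sqrt hS.le
    have hc : 0 < c := Real.sqrt_pos.2 hS
    have hy : ∑ i, ((c⁻¹ • x) i) ^ 2 = 1 := by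
      simp only [Pi.smul_apply, smul_eq_mul, mul_pow, ← Finset.mul_sum, ← hc2]
      field_simp
    have h1 := le_lamMax (A := A) hy
    have h2 : (c⁻¹ • x) ⬝ᵥ A.mulVec (c⁻¹ • x) = c⁻¹ ^ 2 * (x ⬝ᵥ A.mulVec x) := by
      rw [Matrix.mulVec_smul, smul_dotProduct, dotProduct_smul]
      simp [smul_eq_mul]; ring
    rw [h2] at h1
    rw [← hc2]
    have h3 : c⁻¹ ^ 2 * (x ⬝ᵥ A.mulVec x) * c ^ 2 = x ⬝ᵥ A.mulVec x := by
      field_simp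
    nlinarith [mul_le_mul_of_nonneg_right h1 (sq_nonneg c)]





lemma transpose_eq {A : Matrix (Fin k) (Fin k) ℝ} (h : A.IsHermitian) : Aᵀ = A := by
  rw [← Matrix.conjTranspose_eq_transpose_of_trivial]; exact h

lemma entry_symm {A : Matrix (Fin k) (Fin k) ℝ} (h : Aᵀ = A) (i j : Fin k) :
    A i j = A j i := by
  conv_lhs => rw [← h, Matrix.transpose_apply]

open scoped MatrixOrder in
lemma psd_sqrt {S : Matrix (Fin k) (Fin k) ℝ} (hS : S.PosSemidef) :
    ∃ C : Matrix (Fin k) (Fin k) ℝ, C * C = S ∧ Cᵀ = C :=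
  ⟨CFC.sqrt S, CFC.sqrt_mul_sqrt_self S hS.nonneg,
    transpose_eq (CFC.sqrt_nonneg S).posSemidef.isHermitian⟩

/-- key trace computation: `tr (B * S) = ∑ i, colᵢ(C) ⬝ B colᵢ(C)` where `S = C * C`. -/
lemma trace_mul_psd_lower {B S : Matrix (Fin k) (Fin k) ℝ} (hS : S.PosSemidef) :
    lamMin B * S.trace ≤ (B * S).trace := by
  classical
  obtain ⟨C, hC, hCt⟩ := psd_sqrt hS
  have key : (B * S).trace = ∑ i, (fun j => C j i) ⬝ᵥ B.mulVec (fun j => C j i) := by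
    rw [← hC, ← Matrix.mul_assoc, Matrix.trace_mul_comm]
    simp only [Matrix.trace, Matrix.diag, Matrix.mul_apply, dotProduct,
      Matrix.mulVec, Finset.mul_sum, Finset.sum_mul]
    refine Finset.sum_congr rfl fun i _ => Finset.sum_congr rfl fun j _ => ?_
    rw [entry_symm hCt i j]
  have htr : ∑ i, ∑ j, (C j i) ^ 2 = S.trace := by
    rw [← hC]
    simp only [Matrix.trace, Matrix.diag, Matrix.mul_apply]
    rw [Finset.sum_comm]
    refine Finset.sum_congr rfl fun i _ => Finset.sum_congr rfl fun j _ => ?_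
    rw [entry_symm hCt j i, pow_two]
  rw [key, ← htr, Finset.mul_sum]
  exact Finset.sum_le_sum fun i _ => ray_lower B _

lemma trace_mul_psd_upper {B S : Matrix (Fin k) (Fin k) ℝ} (hS : S.PosSemidef) :
    (B * S).trace ≤ lamMax B * S.trace := by
  classical
  obtain ⟨C, hC, hCt⟩ := psd_sqrt hS
  have key : (B * S).trace = ∑ i, (fun j => C j i) ⬝ᵥ B.mulVec (fun j => C j i) := by
    rw [← hC, ← Matrix.mul_assoc, Matrix.trace_mul_comm]
    simp only [Matrix.trace, Matrix.diag, Matrix.mul_apply, dotProduct,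
      Matrix.mulVec, Finset.mul_sum, Finset.sum_mul]
    refine Finset.sum_congr rfl fun i _ => Finset.sum_congr rfl fun j _ => ?_
    rw [entry_symm hCt i j]
  have htr : ∑ i, ∑ j, (C j i) ^ 2 = S.trace := by
    rw [← hC]
    simp only [Matrix.trace, Matrix.diag, Matrix.mul_apply]
    rw [Finset.sum_comm]
    refine Finset.sum_congr rfl fun i _ => Finset.sum_congr rfl fun j _ => ?_
    rw [entry_symm hCt j i, pow_two]
  rw [key, ← htr, Finset.mul_sum]
  exact Finset.sum_le_sum fun i _ => ray_upper B _





/-- quadratic-form bounds for the inverse of a positive definite matrix, on the unit sphere. -/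
lemma inv_ray_bounds (hk : 0 < k) {A : Matrix (Fin k) (Fin k) ℝ} (hA : A.PosDef)
    {x : Fin k → ℝ} (hx : ∑ i, (x i) ^ 2 = 1) :
    1 / lamMax A ≤ x ⬝ᵥ A⁻¹.mulVec x ∧ x ⬝ᵥ A⁻¹.mulVec x ≤ 1 / lamMin A := by
  classical
  have hdet : IsUnit A.det := isUnit_iff_ne_zero.2 hA.det_pos.ne'
  set y : Fin k → ℝ := A⁻¹.mulVec x with hy
  have hAy : A.mulVec y = x := by
    rw [hy, Matrix.mulVec_mulVec, Matrix.mul_nonsing_inv A hdet, Matrix.one_mulVec]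
  have hx0 : x ≠ 0 := by rintro rfl; simp at hx
  have hy0 : y ≠ 0 := by
    rintro h
    rw [h, Matrix.mulVec_zero] at hAy
    exact hx0 hAy.symm
  -- q = x ⬝ y = x ⬝ A⁻¹ x
  set q : ℝ := x ⬝ᵥ y with hq
  have hyAy : y ⬝ᵥ A.mulVec y = q := by
    rw [hAy, dotProduct_comm]
  have hxx : x ⬝ᵥ x = 1 := by
    simp only [dotProduct, ← pow_two]
    exact hx
  have hq_pos : 0 < q := by
    have := hA.dotProduct_mulVec_pos hy0
    simpa [hyAy] using this
  have ha_pos : 0 < x ⬝ᵥ A.mulVec x := by simpa using hA.dotProduct_mulVec_pos hx0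
  set a : ℝ := x ⬝ᵥ A.mulVec x with haq
  have ha_le : a ≤ lamMax A := le_lamMax hx
  have hxAy : x ⬝ᵥ A.mulVec y = 1 := by rw [hAy]; exact hxx
  have hsym : ∀ u v : Fin k → ℝ, u ⬝ᵥ A.mulVec v = v ⬝ᵥ A.mulVec u := by
    intro u v
    simp only [dotProduct, Matrix.mulVec, Finset.mul_sum]
    rw [Finset.sum_comm]
    refine Finset.sum_congr rfl fun j _ => Finset.sum_congr rfl fun i _ => ?_
    rw [entry_symm (transpose_eq hA.isHermitian) i j]; ring
  have hyAx : y ⬝ᵥ A.mulVec x = 1 := by rw [hsym y x]; exact hxAy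
  -- expansion of the quadratic form at x - t • y
  have expand : ∀ t : ℝ, 0 ≤ a - 2 * t + t ^ 2 * q := by
    intro t
    have h0 := hA.posSemidef.dotProduct_mulVec_nonneg (x - t • y)
    have : (x - t • y) ⬝ᵥ A.mulVec (x - t • y)
        = a - 2 * t + t ^ 2 * q := by
      simp only [Matrix.mulVec_sub, Matrix.mulVec_smul, sub_dotProduct,
        dotProduct_sub, smul_dotProduct, dotProduct_smul,
        smul_eq_mul, hxAy, hyAx, hyAy]
      ring
    rw [star_trivial, this] at h0
    exact h0
  have hmax_pos : 0 < lamMax A := lamMax_pos hk hA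
  constructor
  · -- lower bound via t = 1/q
    have h1 := expand (1 / q)
    have h2 : a - 2 * (1 / q) + (1 / q) ^ 2 * q = a - 1 / q := by
      field_simp
      ring
    rw [h2] at h1
    have h3 : 1 / q ≤ a := by linarith
    have h4 : 1 ≤ a * q := (div_le_iff₀ hq_pos).1 h3
    rw [div_le_iff₀ hmax_pos]
    nlinarith [h4, ha_le, hq_pos]
  · -- upper bound via Cauchy-Schwarz on x ⬝ y
    have hmin_pos : 0 < lamMin A := lamMin_pos hk hA
    have hCS : q ^ 2 ≤ ∑ i, (y i) ^ 2 := by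
      have h := Finset.sum_mul_sq_le_sq_mul_sq Finset.univ x y
      have : q = ∑ i, x i * y i := by simp [hq, dotProduct]
      rw [this]
      calc (∑ i, x i * y i) ^ 2 ≤ (∑ i, (x i)^2) * ∑ i, (y i)^2 := h
      _ = ∑ i, (y i) ^ 2 := by rw [hx, one_mul]
    have hray := ray_lower A y
    rw [hyAy] at hray
    rw [le_div_iff₀ hmin_pos]
    nlinarith [hCS, hray, hq_pos, hmin_pos, mul_le_mul_of_nonneg_left hCS hmin_pos.le]





lemma raySet_nonempty (hk : 0 < k) (A : Matrix (Fin k) (Fin k) ℝ) :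
    {r : ℝ | ∃ x : Fin k → ℝ, ∑ i, (x i) ^ 2 = 1 ∧ r = x ⬝ᵥ A.mulVec x}.Nonempty := by
  refine ⟨_, Pi.single ⟨0, hk⟩ 1, ?_, rfl⟩
  simp [Pi.single_apply]

lemma le_lamMin (hk : 0 < k) {A : Matrix (Fin k) (Fin k) ℝ} {c : ℝ}
    (h : ∀ x : Fin k → ℝ, ∑ i, (x i) ^ 2 = 1 → c ≤ x ⬝ᵥ A.mulVec x) : c ≤ lamMin A := by
  refine le_csInf (raySet_nonempty hk A) ?_
  rintro r ⟨x, hx, rfl⟩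
  exact h x hx

lemma lamMax_le (hk : 0 < k) {A : Matrix (Fin k) (Fin k) ℝ} {c : ℝ}
    (h : ∀ x : Fin k → ℝ, ∑ i, (x i) ^ 2 = 1 → x ⬝ᵥ A.mulVec x ≤ c) : lamMax A ≤ c := by
  refine csSup_le (raySet_nonempty hk A) ?_
  rintro r ⟨x, hx, rfl⟩
  exact h x hx

lemma lamMin_inv (hk : 0 < k) {A : Matrix (Fin k) (Fin k) ℝ} (hA : A.PosDef) :
    1 / lamMax A ≤ lamMin A⁻¹ :=
  le_lamMin hk fun x hx => (inv_ray_bounds hk hA hx).1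

lemma lamMax_inv (hk : 0 < k) {A : Matrix (Fin k) (Fin k) ℝ} (hA : A.PosDef) :
    lamMax A⁻¹ ≤ 1 / lamMin A :=
  lamMax_le hk fun x hx => (inv_ray_bounds hk hA hx).2

lemma combo_ray (V V' : Matrix (Fin k) (Fin k) ℝ) (s : ℝ) (x : Fin k → ℝ) :
    x ⬝ᵥ ((1 - s) • V + s • V').mulVec x
      = (1 - s) * (x ⬝ᵥ V.mulVec x) + s * (x ⬝ᵥ V'.mulVec x) := by
  simp only [Matrix.add_mulVec, Matrix.smul_mulVec, dotProduct_add,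
    dotProduct_smul, smul_eq_mul]

lemma lamMax_combo (hk : 0 < k) (V V' : Matrix (Fin k) (Fin k) ℝ) {s : ℝ}
    (hs0 : 0 ≤ s) (hs1 : s ≤ 1) :
    lamMax ((1 - s) • V + s • V') ≤ max (lamMax V) (lamMax V') := by
  refine lamMax_le hk fun x hx => ?_
  rw [combo_ray]
  have h1 := le_lamMax (A := V) hx
  have h2 := le_lamMax (A := V') hx
  have m1 : lamMax V ≤ max (lamMax V) (lamMax V') := le_max_left _ _
  have m2 : lamMax V' ≤ max (lamMax V) (lamMax V') := le_max_right _ _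
  nlinarith

lemma lamMin_combo (hk : 0 < k) (V V' : Matrix (Fin k) (Fin k) ℝ) {s : ℝ}
    (hs0 : 0 ≤ s) (hs1 : s ≤ 1) :
    min (lamMin V) (lamMin V') ≤ lamMin ((1 - s) • V + s • V') := by
  refine le_lamMin hk fun x hx => ?_
  rw [combo_ray]
  have h1 := lamMin_le (A := V) hx
  have h2 := lamMin_le (A := V') hx
  have m1 : min (lamMin V) (lamMin V') ≤ lamMin V := min_le_left _ _
  have m2 : min (lamMin V) (lamMin V') ≤ lamMin V' := min_le_right _ _
  nlinarith

lemma posDef_combo {V V' : Matrix (Fin k) (Fin k) ℝ} (hV : V.PosDef) (hV' : V'.PosDef)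
    {s : ℝ} (hs0 : 0 ≤ s) (hs1 : s ≤ 1) : ((1 - s) • V + s • V').PosDef := by
  rw [Matrix.posDef_iff_dotProduct_mulVec]
  constructor
  · have hsm : ∀ (c : ℝ) (A : Matrix (Fin k) (Fin k) ℝ), A.IsHermitian → (c • A).IsHermitian := by
      intro c A hA
      show (c • A)ᴴ = c • A
      rw [Matrix.conjTranspose_smul, star_trivial, hA.eq]
    exact (hsm _ _ hV.isHermitian).add (hsm _ _ hV'.isHermitian)
  · intro x hx
    have e := combo_ray V V' s x
    have h1 := hV.posSemidef.dotProduct_mulVec_nonneg x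
    have h2 := hV'.posSemidef.dotProduct_mulVec_nonneg x
    rw [star_trivial] at h1 h2 ⊢
    rw [e]
    rcases lt_or_ge s 1 with h | h
    · have h3 := hV.dotProduct_mulVec_pos hx
      rw [star_trivial] at h3
      nlinarith
    · have hs : s = 1 := le_antisymm hs1 h
      have := hV'.dotProduct_mulVec_pos hx
      rw [hs]; simpa using this

lemma combo_eq (V V' : Matrix (Fin k) (Fin k) ℝ) (s : ℝ) :
    V + s • (V' - V) = (1 - s) • V + s • V' := by
  rw [smul_sub, sub_smul, one_smul]
  abel




lemma det_path_hasDerivAt (V W : Matrix (Fin k) (Fin k) ℝ) (s₀ : ℝ)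
    (h : IsUnit (V + s₀ • W).det) :
    HasDerivAt (fun s : ℝ => (V + s • W).det)
      ((V + s₀ • W).det * (((V + s₀ • W)⁻¹ * W)).trace) s₀ := by
  classical
  set A := V + s₀ • W with hA
  set N := A⁻¹ * W with hN
  set pp : Polynomial ℝ := (Matrix.det (1 + (X : ℝ[X]) • N.map C)).divX.divX with hpp
  have key : ∀ s : ℝ, (V + s • W).det
      = A.det * (1 + N.trace * (s - s₀) + pp.eval (s - s₀) * (s - s₀) ^ 2) := by
    intro s
    have hfac : V + s • W = A * (1 + (s - s₀) • N) := by
      rw [mul_add, mul_one, Matrix.mul_smul, hN, ← Matrix.mul_assoc,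
        Matrix.mul_nonsing_inv A h, Matrix.one_mul]
      rw [hA]
      rw [sub_smul]
      abel
    rw [hfac, Matrix.det_mul, Matrix.det_one_add_smul]
  have hinner : HasDerivAt (fun s : ℝ => s - s₀) 1 s₀ := (hasDerivAt_id s₀).sub_const s₀
  have houter : HasDerivAt (fun r : ℝ => (pp * X ^ 2).eval r) 0 0 := by
    have := Polynomial.hasDerivAt (pp * X ^ 2) (0 : ℝ)
    rw [show eval 0 (derivative (pp * X ^ 2)) = (0:ℝ) by simp [Polynomial.derivative_mul]] at this
    exact this
  have hcomp : HasDerivAt (fun s : ℝ => pp.eval (s - s₀) * (s - s₀) ^ 2) 0 s₀ := by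
    have houter' : HasDerivAt (fun r : ℝ => (pp * X ^ 2).eval r) 0 (s₀ - s₀) := by
      simpa using houter
    have h2 := HasDerivAt.comp (h := fun s : ℝ => s - s₀) s₀ houter' hinner
    simpa [Function.comp_def, Polynomial.eval_mul] using h2
  have hlin : HasDerivAt (fun s : ℝ => 1 + N.trace * (s - s₀) + pp.eval (s - s₀) * (s - s₀) ^ 2)
      N.trace s₀ := by
    have : HasDerivAt (fun s : ℝ => N.trace * (s - s₀)) N.trace s₀ := by
      simpa using hinner.const_mul N.trace
    have h3 := (this.const_add 1).add hcomp
    rw [add_zero] at h3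
    exact h3
  have := hlin.const_mul A.det
  refine HasDerivAt.congr_of_eventuallyEq ?_ (Filter.Eventually.of_forall key)
  simpa using this




lemma logdet_hasDerivAt (V W : Matrix (Fin k) (Fin k) ℝ) (s₀ : ℝ)
    (h : (V + s₀ • W).PosDef) :
    HasDerivAt (fun s : ℝ => Real.log (V + s • W).det)
      (((V + s₀ • W)⁻¹ * W).trace) s₀ := by
  have hd0 : (V + s₀ • W).det ≠ 0 := h.det_pos.ne'
  have hd := det_path_hasDerivAt V W s₀ (isUnit_iff_ne_zero.2 hd0)
  have hl := hd.log hd0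
  have : (V + s₀ • W).det * ((V + s₀ • W)⁻¹ * W).trace / (V + s₀ • W).det
      = ((V + s₀ • W)⁻¹ * W).trace := by
    field_simp
  rwa [this] at hl

lemma cont_inv_trace (V W B : Matrix (Fin k) (Fin k) ℝ)
    (h : ∀ s ∈ Set.uIcc (0:ℝ) 1, (V + s • W).PosDef) :
    ContinuousOn (fun s : ℝ => ((V + s • W)⁻¹ * B).trace) (Set.uIcc (0:ℝ) 1) := by
  have hpath : Continuous (fun s : ℝ => V + s • W) :=
    continuous_const.add (continuous_id.smul continuous_const)
  have hcont : ContinuousOn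
      (fun s : ℝ => ((V + s • W).det)⁻¹ * (((V + s • W).adjugate * B).trace))
      (Set.uIcc (0:ℝ) 1) := by
    apply ContinuousOn.mul
    · exact ContinuousOn.inv₀ (hpath.matrix_det.continuousOn)
        (fun s hs => (h s hs).det_pos.ne')
    · exact ((hpath.matrix_adjugate.matrix_mul continuous_const).matrix_trace).continuousOn
  refine hcont.congr fun s hs => ?_
  rw [Matrix.inv_def, Ring.inverse_eq_inv', Matrix.smul_mul, Matrix.trace_smul, smul_eq_mul]

lemma ftc_logdet (V W : Matrix (Fin k) (Fin k) ℝ)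
    (h : ∀ s ∈ Set.uIcc (0:ℝ) 1, (V + s • W).PosDef) :
    ∫ s in (0:ℝ)..1, ((V + s • W)⁻¹ * W).trace
      = Real.log (V + W).det - Real.log V.det := by
  have := intervalIntegral.integral_eq_sub_of_hasDerivAt
    (f := fun s : ℝ => Real.log (V + s • W).det)
    (f' := fun s : ℝ => ((V + s • W)⁻¹ * W).trace)
    (fun t ht => logdet_hasDerivAt V W t (h t ht))
    ((cont_inv_trace V W W h).intervalIntegrable)
  simpa using this





lemma frob_self_nonneg (W : Matrix (Fin k) (Fin k) ℝ) : 0 ≤ frobInner W W := by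
  unfold frobInner
  simp only [Matrix.trace, Matrix.diag, Matrix.mul_apply, Matrix.transpose_apply]
  refine Finset.sum_nonneg fun i _ => Finset.sum_nonneg fun j _ => mul_self_nonneg _

lemma trace_cyc4 (A B C D : Matrix (Fin k) (Fin k) ℝ) :
    (A * B * C * D).trace = (C * D * A * B).trace := by
  calc (A * B * C * D).trace = ((A * B) * (C * D)).trace := by rw [Matrix.mul_assoc (A*B) C D]
    _ = ((C * D) * (A * B)).trace := Matrix.trace_mul_comm _ _
    _ = (C * D * A * B).trace := by rw [← Matrix.mul_assoc (C*D) A B]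

lemma inv_transpose_of_posdef {A : Matrix (Fin k) (Fin k) ℝ} (hA : A.PosDef) :
    (A⁻¹)ᵀ = A⁻¹ := by
  rw [Matrix.transpose_nonsing_inv, transpose_eq hA.isHermitian]

/-- the integrand identity. -/
lemma integrand_eq {V W : Matrix (Fin k) (Fin k) ℝ} (hV : V.PosDef) (hW : Wᵀ = W)
    {s : ℝ} (hVs : (V + s • W).PosDef) :
    frobInner (V⁻¹ * (s • W) * (V + s • W)⁻¹) W
      = (V⁻¹ * W).trace - ((V + s • W)⁻¹ * W).trace := by
  set Vs := V + s • W with hVsdef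
  have hVd : IsUnit V.det := isUnit_iff_ne_zero.2 hV.det_pos.ne'
  have hVsd : IsUnit Vs.det := isUnit_iff_ne_zero.2 hVs.det_pos.ne'
  have hdiff : V⁻¹ - Vs⁻¹ = V⁻¹ * (s • W) * Vs⁻¹ := by
    have h1 : (s • W : Matrix (Fin k) (Fin k) ℝ) = Vs - V := by rw [hVsdef]; abel
    rw [h1, Matrix.mul_sub, Matrix.sub_mul, Matrix.mul_assoc,
      Matrix.mul_nonsing_inv Vs hVsd, Matrix.mul_one, Matrix.nonsing_inv_mul V hVd,
      Matrix.one_mul]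
  have htrans : (V⁻¹ * (s • W) * Vs⁻¹)ᵀ = Vs⁻¹ * (s • W) * V⁻¹ := by
    rw [Matrix.transpose_mul, Matrix.transpose_mul, Matrix.transpose_smul, hW,
      inv_transpose_of_posdef hV, inv_transpose_of_posdef hVs, Matrix.mul_assoc]
  unfold frobInner
  rw [htrans, trace_cyc4, ← Matrix.trace_sub, ← Matrix.sub_mul, hdiff]
  simp only [Matrix.mul_smul, Matrix.smul_mul, Matrix.trace_smul, smul_eq_mul]

lemma frob_expand {V W : Matrix (Fin k) (Fin k) ℝ} (hV : V.PosDef) (hW : Wᵀ = W)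
    {s : ℝ} (hVs : (V + s • W).PosDef) :
    frobInner (V⁻¹ * (s • W) * (V + s • W)⁻¹) W
      = s * ((V + s • W)⁻¹ * (W * V⁻¹ * W)).trace := by
  set Vs := V + s • W with hVsdef
  have htrans : (V⁻¹ * (s • W) * Vs⁻¹)ᵀ = Vs⁻¹ * (s • W) * V⁻¹ := by
    rw [Matrix.transpose_mul, Matrix.transpose_mul, Matrix.transpose_smul, hW,
      inv_transpose_of_posdef hV, inv_transpose_of_posdef hVs, Matrix.mul_assoc]
  unfold frobInner
  rw [htrans]
  simp only [Matrix.mul_smul, Matrix.smul_mul, Matrix.trace_smul, smul_eq_mul,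
    Matrix.mul_assoc]

section bounds
variable {V V' : Matrix (Fin k) (Fin k) ℝ}

lemma integrand_lower (hk : 0 < k) (hV : V.PosDef) (hV' : V'.PosDef)
    {s : ℝ} (hs0 : 0 ≤ s) (hs1 : s ≤ 1) :
    s * frobInner (V' - V) (V' - V) / (max (lamMax V) (lamMax V')) ^ 2
      ≤ frobInner (V⁻¹ * (s • (V' - V)) * (V + s • (V' - V))⁻¹) (V' - V) := by
  set W := V' - V with hWdef
  have hW : Wᵀ = W := by
    rw [hWdef, Matrix.transpose_sub, transpose_eq hV'.isHermitian, transpose_eq hV.isHermitian]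
  have hVs : (V + s • W).PosDef := by
    rw [hWdef, combo_eq V V' s]; exact posDef_combo hV hV' hs0 hs1
  set Vs := V + s • W with hVsdef
  set mP := max (lamMax V) (lamMax V') with hmPdef
  have hm : 0 < mP := lt_max_of_lt_left (lamMax_pos hk hV)
  have hWH : Wᴴ = W := by rw [Matrix.conjTranspose_eq_transpose_of_trivial, hW]
  have hS : (W * V⁻¹ * W).PosSemidef := by
    have := hV.inv.posSemidef.mul_mul_conjTranspose_same W
    rwa [hWH] at this
  have hWW : (W * W).PosSemidef := by
    have := Matrix.posSemidef_conjTranspose_mul_self W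
    rwa [hWH] at this
  have hSS : (W * V⁻¹ * W).trace = (V⁻¹ * (W * W)).trace := by
    calc (W * V⁻¹ * W).trace = (W * (W * V⁻¹)).trace := Matrix.trace_mul_comm _ _
      _ = ((W * W) * V⁻¹).trace := by rw [← Matrix.mul_assoc]
      _ = (V⁻¹ * (W * W)).trace := Matrix.trace_mul_comm _ _
  have hfrob : frobInner W W = (W * W).trace := by unfold frobInner; rw [hW]
  have hWWnn : 0 ≤ (W * W).trace := by rw [← hfrob]; exact frob_self_nonneg W
  have haV : 0 < lamMin V⁻¹ := lamMin_pos hk hV.inv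
  have hbVs : 0 < lamMin Vs⁻¹ := lamMin_pos hk hVs.inv
  have tlow1 : lamMin V⁻¹ * (W * W).trace ≤ (V⁻¹ * (W * W)).trace := trace_mul_psd_lower hWW
  have tlow2 : lamMin Vs⁻¹ * (W * V⁻¹ * W).trace ≤ (Vs⁻¹ * (W * V⁻¹ * W)).trace :=
    trace_mul_psd_lower hS
  have hSnn : 0 ≤ (W * V⁻¹ * W).trace := by
    rw [hSS]; exact le_trans (mul_nonneg haV.le hWWnn) tlow1
  have e1 : 1 ≤ mP * lamMin V⁻¹ := by
    have h1 : 1 / lamMax V ≤ lamMin V⁻¹ := lamMin_inv hk hV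
    have h2 : (1:ℝ) ≤ lamMax V * lamMin V⁻¹ := by
      rwa [div_le_iff₀' (lamMax_pos hk hV)] at h1
    calc (1:ℝ) ≤ lamMax V * lamMin V⁻¹ := h2
      _ ≤ mP * lamMin V⁻¹ :=
        mul_le_mul_of_nonneg_right (le_max_left _ _) haV.le
  have e2 : 1 ≤ mP * lamMin Vs⁻¹ := by
    have hVsmax : lamMax Vs ≤ mP := by
      rw [hVsdef, hWdef, combo_eq V V' s]; exact lamMax_combo hk V V' hs0 hs1
    have h1 : 1 / lamMax Vs ≤ lamMin Vs⁻¹ := lamMin_inv hk hVs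
    have h2 : (1:ℝ) ≤ lamMax Vs * lamMin Vs⁻¹ := by
      rwa [div_le_iff₀' (lamMax_pos hk hVs)] at h1
    calc (1:ℝ) ≤ lamMax Vs * lamMin Vs⁻¹ := h2
      _ ≤ mP * lamMin Vs⁻¹ := mul_le_mul_of_nonneg_right hVsmax hbVs.le
  set T := (Vs⁻¹ * (W * V⁻¹ * W)).trace with hTdef
  have hF_le : (W * W).trace ≤ mP * (W * V⁻¹ * W).trace := by
    calc (W * W).trace = 1 * (W * W).trace := (one_mul _).symm
      _ ≤ (mP * lamMin V⁻¹) * (W * W).trace := mul_le_mul_of_nonneg_right e1 hWWnn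
      _ = mP * (lamMin V⁻¹ * (W * W).trace) := by ring
      _ ≤ mP * (V⁻¹ * (W * W)).trace := mul_le_mul_of_nonneg_left tlow1 hm.le
      _ = mP * (W * V⁻¹ * W).trace := by rw [← hSS]
  have hS_le : (W * V⁻¹ * W).trace ≤ mP * T := by
    calc (W * V⁻¹ * W).trace = 1 * (W * V⁻¹ * W).trace := (one_mul _).symm
      _ ≤ (mP * lamMin Vs⁻¹) * (W * V⁻¹ * W).trace := mul_le_mul_of_nonneg_right e2 hSnn
      _ = mP * (lamMin Vs⁻¹ * (W * V⁻¹ * W).trace) := by ring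
      _ ≤ mP * T := mul_le_mul_of_nonneg_left tlow2 hm.le
  have hkey : (W * W).trace ≤ mP ^ 2 * T := by
    calc (W * W).trace ≤ mP * (W * V⁻¹ * W).trace := hF_le
      _ ≤ mP * (mP * T) := mul_le_mul_of_nonneg_left hS_le hm.le
      _ = mP ^ 2 * T := by ring
  rw [frob_expand hV hW hVs, hfrob, div_le_iff₀ (pow_pos hm 2)]
  nlinarith [mul_le_mul_of_nonneg_left hkey hs0]

lemma integrand_upper (hk : 0 < k) (hV : V.PosDef) (hV' : V'.PosDef)
    {s : ℝ} (hs0 : 0 ≤ s) (hs1 : s ≤ 1) :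
    frobInner (V⁻¹ * (s • (V' - V)) * (V + s • (V' - V))⁻¹) (V' - V)
      ≤ s * frobInner (V' - V) (V' - V) / (min (lamMin V) (lamMin V')) ^ 2 := by
  set W := V' - V with hWdef
  have hW : Wᵀ = W := by
    rw [hWdef, Matrix.transpose_sub, transpose_eq hV'.isHermitian, transpose_eq hV.isHermitian]
  have hVs : (V + s • W).PosDef := by
    rw [hWdef, combo_eq V V' s]; exact posDef_combo hV hV' hs0 hs1
  set Vs := V + s • W with hVsdef
  set mM := min (lamMin V) (lamMin V') with hmMdef
  have hm : 0 < mM := lt_min (lamMin_pos hk hV) (lamMin_pos hk hV')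
  have hWH : Wᴴ = W := by rw [Matrix.conjTranspose_eq_transpose_of_trivial, hW]
  have hS : (W * V⁻¹ * W).PosSemidef := by
    have := hV.inv.posSemidef.mul_mul_conjTranspose_same W
    rwa [hWH] at this
  have hWW : (W * W).PosSemidef := by
    have := Matrix.posSemidef_conjTranspose_mul_self W
    rwa [hWH] at this
  have hSS : (W * V⁻¹ * W).trace = (V⁻¹ * (W * W)).trace := by
    calc (W * V⁻¹ * W).trace = (W * (W * V⁻¹)).trace := Matrix.trace_mul_comm _ _
      _ = ((W * W) * V⁻¹).trace := by rw [← Matrix.mul_assoc]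
      _ = (V⁻¹ * (W * W)).trace := Matrix.trace_mul_comm _ _
  have hfrob : frobInner W W = (W * W).trace := by unfold frobInner; rw [hW]
  have hWWnn : 0 ≤ (W * W).trace := by rw [← hfrob]; exact frob_self_nonneg W
  have haV : 0 < lamMax V⁻¹ := lamMax_pos hk hV.inv
  have hbVs : 0 < lamMax Vs⁻¹ := lamMax_pos hk hVs.inv
  have tup1 : (V⁻¹ * (W * W)).trace ≤ lamMax V⁻¹ * (W * W).trace := trace_mul_psd_upper hWW
  have tup2 : (Vs⁻¹ * (W * V⁻¹ * W)).trace ≤ lamMax Vs⁻¹ * (W * V⁻¹ * W).trace :=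
    trace_mul_psd_upper hS
  have tlow1 : lamMin V⁻¹ * (W * W).trace ≤ (V⁻¹ * (W * W)).trace := trace_mul_psd_lower hWW
  have hSnn : 0 ≤ (W * V⁻¹ * W).trace := by
    rw [hSS]
    exact le_trans (mul_nonneg (lamMin_pos hk hV.inv).le hWWnn) tlow1
  have e1 : mM * lamMax V⁻¹ ≤ 1 := by
    have h1 : lamMax V⁻¹ ≤ 1 / lamMin V := lamMax_inv hk hV
    have h2 : lamMin V * lamMax V⁻¹ ≤ 1 := by
      rwa [le_div_iff₀' (lamMin_pos hk hV)] at h1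
    calc mM * lamMax V⁻¹ ≤ lamMin V * lamMax V⁻¹ :=
        mul_le_mul_of_nonneg_right (min_le_left _ _) haV.le
      _ ≤ 1 := h2
  have e2 : mM * lamMax Vs⁻¹ ≤ 1 := by
    have hVsmin : mM ≤ lamMin Vs := by
      rw [hVsdef, hWdef, combo_eq V V' s]; exact lamMin_combo hk V V' hs0 hs1
    have h1 : lamMax Vs⁻¹ ≤ 1 / lamMin Vs := lamMax_inv hk hVs
    have h2 : lamMin Vs * lamMax Vs⁻¹ ≤ 1 := by
      rwa [le_div_iff₀' (lamMin_pos hk hVs)] at h1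
    calc mM * lamMax Vs⁻¹ ≤ lamMin Vs * lamMax Vs⁻¹ :=
        mul_le_mul_of_nonneg_right hVsmin hbVs.le
      _ ≤ 1 := h2
  set T := (Vs⁻¹ * (W * V⁻¹ * W)).trace with hTdef
  have hS_le : mM * (W * V⁻¹ * W).trace ≤ (W * W).trace := by
    calc mM * (W * V⁻¹ * W).trace = mM * (V⁻¹ * (W * W)).trace := by rw [hSS]
      _ ≤ mM * (lamMax V⁻¹ * (W * W).trace) := mul_le_mul_of_nonneg_left tup1 hm.le
      _ = (mM * lamMax V⁻¹) * (W * W).trace := by ring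
      _ ≤ 1 * (W * W).trace := mul_le_mul_of_nonneg_right e1 hWWnn
      _ = (W * W).trace := one_mul _
  have hT_le : mM * T ≤ (W * V⁻¹ * W).trace := by
    calc mM * T ≤ mM * (lamMax Vs⁻¹ * (W * V⁻¹ * W).trace) := mul_le_mul_of_nonneg_left tup2 hm.le
      _ = (mM * lamMax Vs⁻¹) * (W * V⁻¹ * W).trace := by ring
      _ ≤ 1 * (W * V⁻¹ * W).trace := mul_le_mul_of_nonneg_right e2 hSnn
      _ = (W * V⁻¹ * W).trace := one_mul _
  have hkey : mM ^ 2 * T ≤ (W * W).trace := by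
    calc mM ^ 2 * T = mM * (mM * T) := by ring
      _ ≤ mM * (W * V⁻¹ * W).trace := mul_le_mul_of_nonneg_left hT_le hm.le
      _ ≤ (W * W).trace := hS_le
  rw [frob_expand hV hW hVs, hfrob, le_div_iff₀ (pow_pos hm 2)]
  nlinarith [mul_le_mul_of_nonneg_left hkey hs0]

end bounds


end ETEB

open ETEB in
theorem entropy_taylor_expansion_bounds {k : ℕ}
    (M V V' : Matrix (Fin k) (Fin k) ℝ) (hM : M.IsHermitian) (rho : ℝ) (hrho : 0 < rho)
    (hV : V.PosDef) (hV' : V'.PosDef) :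
    entV M rho V' - entV M rho V
        = frobInner (((1:ℝ)/2) • (M - rho • V⁻¹)) (V' - V)
          + (rho / 2) * ∫ s in (0:ℝ)..1,
              frobInner (V⁻¹ * (s • (V' - V)) * (V + s • (V' - V))⁻¹) (V' - V) ∧
    entV M rho V' - entV M rho V
        ≥ frobInner (((1:ℝ)/2) • (M - rho • V⁻¹)) (V' - V)
          + (rho / 4) * frobInner (V' - V) (V' - V) / max (lamMax V) (lamMax V') ^ 2 ∧
    entV M rho V' - entV M rho V
        ≤ frobInner (((1:ℝ)/2) • (M - rho • V⁻¹)) (V' - V)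
          + (rho / 4) * frobInner (V' - V) (V' - V) / min (lamMin V) (lamMin V') ^ 2 := by
  rcases Nat.eq_zero_or_pos k with hk0 | hk
  · subst hk0
    have hfrob0 : ∀ A B : Matrix (Fin 0) (Fin 0) ℝ, frobInner A B = 0 := by
      intro A B; unfold frobInner; simp [Matrix.trace]
    have hent0 : ∀ A : Matrix (Fin 0) (Fin 0) ℝ, entV M rho A = 0 := by
      intro A; unfold entV; rw [hfrob0, Matrix.det_isEmpty]; simp
    refine ⟨?_, ?_, ?_⟩ <;> simp [hfrob0, hent0]
  -- main case
  have hW : (V' - V)ᵀ = V' - V := by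
    rw [Matrix.transpose_sub, transpose_eq hV'.isHermitian, transpose_eq hV.isHermitian]
  set W := V' - V with hWdef
  have hVW : V + W = V' := by rw [hWdef]; abel
  have hposs : ∀ s ∈ Set.uIcc (0:ℝ) 1, (V + s • W).PosDef := by
    intro s hs
    rw [Set.uIcc_of_le zero_le_one] at hs
    rw [hWdef, combo_eq]
    exact posDef_combo hV hV' hs.1 hs.2
  have hEqOn : Set.EqOn (fun s : ℝ => frobInner (V⁻¹ * (s • W) * (V + s • W)⁻¹) W)
      (fun s : ℝ => (V⁻¹ * W).trace - ((V + s • W)⁻¹ * W).trace) (Set.uIcc (0:ℝ) 1) :=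
    fun s hs => integrand_eq hV hW (hposs s hs)
  have hcontT : ContinuousOn (fun s : ℝ => ((V + s • W)⁻¹ * W).trace) (Set.uIcc (0:ℝ) 1) :=
    cont_inv_trace V W W hposs
  have hIntT : IntervalIntegrable (fun s : ℝ => ((V + s • W)⁻¹ * W).trace)
      volume 0 1 := hcontT.intervalIntegrable
  have hIntF : IntervalIntegrable (fun s : ℝ => frobInner (V⁻¹ * (s • W) * (V + s • W)⁻¹) W)
      volume 0 1 :=
    ((continuousOn_const.sub hcontT).congr hEqOn).intervalIntegrable
  have hIval : (∫ s in (0:ℝ)..1, frobInner (V⁻¹ * (s • W) * (V + s • W)⁻¹) W)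
      = (V⁻¹ * W).trace - (Real.log V'.det - Real.log V.det) := by
    rw [intervalIntegral.integral_congr hEqOn,
      intervalIntegral.integral_sub intervalIntegrable_const hIntT,
      intervalIntegral.integral_const, ftc_logdet V W hposs, hVW]
    simp
  have hgrad : frobInner (((1:ℝ)/2) • (M - rho • V⁻¹)) W
      = (1/2) * (frobInner M W - rho * (V⁻¹ * W).trace) := by
    unfold frobInner
    rw [Matrix.transpose_smul, Matrix.transpose_sub, Matrix.transpose_smul,
      Matrix.smul_mul, Matrix.trace_smul, Matrix.sub_mul, Matrix.trace_sub,
      Matrix.smul_mul, Matrix.trace_smul, inv_transpose_of_posdef hV]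
    simp [smul_eq_mul]
  have hMsub : frobInner M V' - frobInner M V = frobInner M W := by
    unfold frobInner
    rw [hWdef, Matrix.mul_sub, Matrix.trace_sub]
  have hEq1 : entV M rho V' - entV M rho V
      = frobInner (((1:ℝ)/2) • (M - rho • V⁻¹)) W
        + (rho / 2) * ∫ s in (0:ℝ)..1,
            frobInner (V⁻¹ * (s • W) * (V + s • W)⁻¹) W := by
    rw [hIval, hgrad]
    unfold entV
    linear_combination hMsub / 2
  refine ⟨hEq1, ?_, ?_⟩
  · -- lower bound
    set mP := max (lamMax V) (lamMax V') with hmPdef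
    set F := frobInner W W with hFdef
    have hlow : ∀ s ∈ Set.Icc (0:ℝ) 1,
        s * F / mP ^ 2 ≤ frobInner (V⁻¹ * (s • W) * (V + s • W)⁻¹) W :=
      fun s hs => integrand_lower hk hV hV' hs.1 hs.2
    have hcl : Continuous (fun s : ℝ => s * F / mP ^ 2) := by fun_prop
    have hmono := intervalIntegral.integral_mono_on (μ := volume) zero_le_one
      (hcl.intervalIntegrable 0 1) hIntF hlow
    have hlv : (∫ s in (0:ℝ)..1, s * F / mP ^ 2) = F / mP ^ 2 / 2 := by
      have hfun : (fun s : ℝ => s * F / mP ^ 2) = fun s : ℝ => s * (F / mP ^ 2) := by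
        funext s; ring
      rw [hfun, intervalIntegral.integral_mul_const, integral_id]
      ring
    rw [hlv] at hmono
    rw [hEq1]
    have h2 := mul_le_mul_of_nonneg_left hmono (by positivity : (0:ℝ) ≤ rho / 2)
    have h3 : rho / 2 * (F / mP ^ 2 / 2) = rho / 4 * F / mP ^ 2 := by ring
    linarith
  · -- upper bound
    set mM := min (lamMin V) (lamMin V') with hmMdef
    set F := frobInner W W with hFdef
    have hup : ∀ s ∈ Set.Icc (0:ℝ) 1,
        frobInner (V⁻¹ * (s • W) * (V + s • W)⁻¹) W ≤ s * F / mM ^ 2 :=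
      fun s hs => integrand_upper hk hV hV' hs.1 hs.2
    have hcl : Continuous (fun s : ℝ => s * F / mM ^ 2) := by fun_prop
    have hmono := intervalIntegral.integral_mono_on (μ := volume) zero_le_one
      hIntF (hcl.intervalIntegrable 0 1) hup
    have hlv : (∫ s in (0:ℝ)..1, s * F / mM ^ 2) = F / mM ^ 2 / 2 := by
      have hfun : (fun s : ℝ => s * F / mM ^ 2) = fun s : ℝ => s * (F / mM ^ 2) := by
        funext s; ring
      rw [hfun, intervalIntegral.integral_mul_const, integral_id]
      ring
    rw [hlv] at hmono
    rw [hEq1]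
    have h2 := mul_le_mul_of_nonneg_left hmono (by positivity : (0:ℝ) ≤ rho / 2)
    have h3 : rho / 2 * (F / mM ^ 2 / 2) = rho / 4 * F / mM ^ 2 := by ring
    linarith
end
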